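/- Let 𝒢 be a finite collection of finite simple graphs, each on n vertices, and suppose 𝒢 is simultaneously embeddable. Then 𝒢 is simultaneously embeddable on a point set of size n in general position, i.e., there exists a set P ⊆ ℝ² of n points with no three points collinear such that every G ∈ 𝒢 embeds straight-line on P. -/
import Mathlib


noncomputable section

/-- The Euclidean plane. -/
abbrev Plane := EuclideanSpace ℝ (Fin 2)

/-- `π` is a straight-line embedding of the simple graph `G` in the plane:
it is injective, the closed segments of two distinct edges meet only in images of
common endpoints, and no vertex image lies in the open segment of a non-incident edge. -/
def IsSLEmbedding {V : Type*} (G : SimpleGraph V) (π : V → Plane) : Prop :=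
  Function.Injective π ∧
  (∀ u v x y : V, G.Adj u v → G.Adj x y → s(u, v) ≠ s(x, y) →
    segment ℝ (π u) (π v) ∩ segment ℝ (π x) (π y) ⊆ π '' (({u, v} : Set V) ∩ ({x, y} : Set V))) ∧
  (∀ u v w : V, G.Adj u v → w ≠ u → w ≠ v → π w ∉ openSegment ℝ (π u) (π v))

/-- `G` embeds straight-line on the point set `P`. -/
def EmbedsOn {V : Type*} (G : SimpleGraph V) (P : Set Plane) : Prop :=
  ∃ π : V → Plane, IsSLEmbedding G π ∧ Set.range π = P

/-- `G` embeds straight-line on some point set (equivalently, `G` is planar). -/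
def PlanarEmbeddable {V : Type*} (G : SimpleGraph V) : Prop :=
  ∃ π : V → Plane, IsSLEmbedding G π

/-- A family of graphs on `n` vertices is simultaneously embeddable if there is a point
set of size `n` on which every member embeds straight-line. -/
def SimultaneouslyEmbeddable {n : ℕ} (𝒢 : Set (SimpleGraph (Fin n))) : Prop :=
  ∃ P : Finset Plane, P.card = n ∧ ∀ G ∈ 𝒢, EmbedsOn G ↑P

/-- A conflict collection: a family of planar-embeddable graphs on `n` vertices that is
not simultaneously embeddable. -/
def ConflictCollection {n : ℕ} (𝒢 : Set (SimpleGraph (Fin n))) : Prop :=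
  (∀ G ∈ 𝒢, PlanarEmbeddable G) ∧ ¬ SimultaneouslyEmbeddable 𝒢


open Set Metric MeasureTheory

lemma seg_compact (a b : Plane) : IsCompact (segment ℝ a b) := by
  rw [segment_eq_image]
  exact isCompact_Icc.image (by fun_prop)

lemma collinear_of_smul {a b c : Plane} {r : ℝ} (h : c = r • (b - a) + a) :
    Collinear ℝ ({a, b, c} : Set Plane) := by
  refine (collinear_iff_of_mem (Set.mem_insert a _)).2 ⟨b - a, ?_⟩
  rintro p (rfl | rfl | rfl)
  exacts [⟨0, by rw [vadd_eq_add]; module⟩, ⟨1, by rw [vadd_eq_add]; module⟩, ⟨r, by rw [vadd_eq_add]; exact h⟩]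

lemma collinear_of_combo {x y z : Plane} {a b : ℝ} (hab : a + b = 1) (hz : a • x + b • y = z) :
    Collinear ℝ ({x, y, z} : Set Plane) := by
  refine collinear_of_smul (r := b) ?_
  have ha : a = 1 - b := by linarith
  rw [← hz, ha]; module

lemma seg_inter_single {a b c : Plane} (h : ¬ Collinear ℝ ({a, b, c} : Set Plane)) :
    segment ℝ a b ∩ segment ℝ a c ⊆ {a} := by
  have hab : a ≠ b := by
    rintro rfl
    exact h ((collinear_pair ℝ a c).subset (by intro x hx; simp at hx ⊢; tauto))
  rintro p ⟨hp1, hp2⟩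
  obtain ⟨a1, b1, ha1, hb1, hab1, heq1⟩ := hp1
  obtain ⟨a2, b2, ha2, hb2, hab2, heq2⟩ := hp2
  have h1 : a1 = 1 - b1 := by linarith
  have h2 : a2 = 1 - b2 := by linarith
  subst h1 h2
  rcases eq_or_lt_of_le hb1 with hb1' | hb1'
  · have : p = a := by rw [← heq1, ← hb1']; module
    simp [this]
  rcases eq_or_lt_of_le hb2 with hb2' | hb2'
  · -- p = a from second, then b1 • (b - a) = 0, so b = a, contradiction
    exfalso
    have hp : p = a := by rw [← heq2, ← hb2']; module
    have hba : b1 • (b - a) = 0 := by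
      have := heq1; rw [hp] at this
      linear_combination (norm := module) this
    rcases smul_eq_zero.1 hba with h' | h'
    · exact absurd h' (ne_of_gt hb1')
    · exact hab (sub_eq_zero.1 h').symm
  · exfalso
    apply h
    refine collinear_of_smul (r := b1 / b2) ?_
    have key : b2 • (c - a) = b1 • (b - a) := by
      have h12 := heq1.trans heq2.symm
      linear_combination (norm := module) -h12
    have : c - a = (b1 / b2) • (b - a) := by
      rw [div_eq_inv_mul, ← smul_smul, ← key, inv_smul_smul₀ (ne_of_gt hb2')]
    rw [← this]; abel

instance : (volume : Measure Plane).IsAddHaarMeasure :=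
  (EuclideanSpace.basisFun (Fin 2) ℝ).addHaar_eq_volume ▸ inferInstance

lemma span_pair_ne_top (a b : Plane) : affineSpan ℝ ({a, b} : Set Plane) ≠ ⊤ := by
  intro htop
  have h1 : Collinear ℝ ({a, b} : Set Plane) := collinear_pair ℝ a b
  rw [collinear_iff_finrank_le_one] at h1
  have h2 : vectorSpan ℝ ({a, b} : Set Plane) = ⊤ := by
    rw [← direction_affineSpan, htop, AffineSubspace.direction_top]
  rw [h2] at h1
  rw [finrank_top, finrank_euclideanSpace_fin] at h1
  omega

lemma exists_gp (k : ℕ) (f : Fin k → Plane) {ε : ℝ} (hε : 0 < ε) :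
    ∃ q : Fin k → Plane, (∀ i, dist (q i) (f i) < ε) ∧ Function.Injective q ∧
      ∀ i j l : Fin k, i ≠ j → i ≠ l → j ≠ l →
        ¬ Collinear ℝ ({q i, q j, q l} : Set Plane) := by
  induction k with
  | zero =>
    exact ⟨f, fun i => i.elim0, fun i => i.elim0, fun i => i.elim0⟩
  | succ k ih =>
    obtain ⟨q0, hd0, hinj0, hgp0⟩ := ih (f ∘ Fin.castSucc)
    set B : Set Plane := ⋃ i : Fin k, ⋃ j : Fin k,
      (affineSpan ℝ ({q0 i, q0 j} : Set Plane) : Set Plane) with hB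
    have hBnull : volume B = 0 := by
      refine measure_iUnion_null fun i => measure_iUnion_null fun j => ?_
      exact Measure.addHaar_affineSubspace volume _ (span_pair_ne_top _ _)
    have hball : volume (ball (f (Fin.last k)) ε) ≠ 0 :=
      (measure_ball_pos volume _ hε).ne'
    have hz : ∃ z ∈ ball (f (Fin.last k)) ε, z ∉ B := by
      by_contra hcon
      push_neg at hcon
      exact hball (measure_mono_null hcon hBnull)
    obtain ⟨z, hzball, hzB⟩ := hz
    have hzspan : ∀ i j : Fin k, z ∉ (affineSpan ℝ ({q0 i, q0 j} : Set Plane) : Set Plane) := by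
      intro i j hmem
      exact hzB (Set.mem_iUnion.2 ⟨i, Set.mem_iUnion.2 ⟨j, hmem⟩⟩)
    have hzne : ∀ i : Fin k, z ≠ q0 i := by
      intro i heq
      exact hzspan i i (heq ▸ mem_affineSpan ℝ (Set.mem_insert _ _))
    refine ⟨Fin.snoc q0 z, ?_, ?_, ?_⟩
    · intro i
      rcases Fin.eq_castSucc_or_eq_last i with ⟨j, rfl⟩ | rfl
      · simpa using hd0 j
      · simpa using mem_ball.1 hzball
    · intro i j hij
      rcases Fin.eq_castSucc_or_eq_last i with ⟨i', rfl⟩ | rfl <;>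
        rcases Fin.eq_castSucc_or_eq_last j with ⟨j', rfl⟩ | rfl
      · simp only [Fin.snoc_castSucc] at hij
        exact congrArg Fin.castSucc (hinj0 hij)
      · simp only [Fin.snoc_castSucc, Fin.snoc_last] at hij
        exact absurd hij.symm (hzne i')
      · simp only [Fin.snoc_castSucc, Fin.snoc_last] at hij
        exact absurd hij (hzne j')
      · rfl
    · -- general position
      have key : ∀ (a b : Fin k) (S : Set Plane), a ≠ b → q0 a ∈ S → q0 b ∈ S → z ∈ S →
          ¬ Collinear ℝ S := by
        intro a b S hab ha hb hzS hcol
        exact hzspan a b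
          (hcol.mem_affineSpan_of_mem_of_ne ha hb hzS
            (fun h => hab (hinj0 h)))
      intro i j l hij hil hjl
      rcases Fin.eq_castSucc_or_eq_last i with ⟨i', rfl⟩ | rfl <;>
        rcases Fin.eq_castSucc_or_eq_last j with ⟨j', rfl⟩ | rfl <;>
          rcases Fin.eq_castSucc_or_eq_last l with ⟨l', rfl⟩ | rfl
      · simp only [Fin.snoc_castSucc]
        exact hgp0 i' j' l' (fun h => hij (congrArg _ h)) (fun h => hil (congrArg _ h))
          (fun h => hjl (congrArg _ h))
      · simp only [Fin.snoc_castSucc, Fin.snoc_last]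
        exact key i' j' _ (fun h => hij (congrArg _ h)) (by simp) (by simp) (by simp)
      · simp only [Fin.snoc_castSucc, Fin.snoc_last]
        exact key i' l' _ (fun h => hil (congrArg _ h)) (by simp) (by simp) (by simp)
      · exact absurd rfl hjl
      · simp only [Fin.snoc_castSucc, Fin.snoc_last]
        exact key j' l' _ (fun h => hjl (congrArg _ h)) (by simp) (by simp) (by simp)
      · exact absurd rfl hil
      · exact absurd rfl hij
      · exact absurd rfl hij

lemma uniform_eps {α : Type*} (s : Finset α) (Q : α → ℝ → Prop)
    (hm : ∀ a ε δ, 0 < δ → δ ≤ ε → Q a ε → Q a δ)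
    (h : ∀ a ∈ s, ∃ ε > 0, Q a ε) : ∃ ε > 0, ∀ a ∈ s, Q a ε := by
  classical
  induction s using Finset.induction with
  | empty => exact ⟨1, one_pos, fun a ha => absurd ha (by simp)⟩
  | @insert a s _ ih =>
    obtain ⟨ε1, hε1, h1⟩ := ih (fun b hb => h b (Finset.mem_insert_of_mem hb))
    obtain ⟨ε2, hε2, h2⟩ := h a (Finset.mem_insert_self a s)
    refine ⟨min ε1 ε2, lt_min hε1 hε2, ?_⟩
    intro b hb
    rcases Finset.mem_insert.1 hb with rfl | hb
    · exact hm b ε2 _ (lt_min hε1 hε2) (min_le_right _ _) h2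
    · exact hm b ε1 _ (lt_min hε1 hε2) (min_le_left _ _) (h1 b hb)

-- points on perturbed segments are close to the original segment
lemma near_segment {a b a' b' : Plane} {ε : ℝ} (hε : 0 < ε)
    (ha : dist a' a < ε) (hb : dist b' b < ε) {p : Plane} (hp : p ∈ segment ℝ a' b') :
    ∃ q ∈ segment ℝ a b, dist p q < ε := by
  obtain ⟨s, t, hs, ht, hst, rfl⟩ := hp
  refine ⟨s • a + t • b, ⟨s, t, hs, ht, hst, rfl⟩, ?_⟩
  have : s • a' + t • b' - (s • a + t • b) = s • (a' - a) + t • (b' - b) := by module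
  rw [dist_eq_norm, this]
  calc ‖s • (a' - a) + t • (b' - b)‖ ≤ s * ‖a' - a‖ + t * ‖b' - b‖ := by
        refine (norm_add_le _ _).trans ?_
        rw [norm_smul, norm_smul, Real.norm_eq_abs, Real.norm_eq_abs,
          abs_of_nonneg hs, abs_of_nonneg ht]
    _ < ε := by
        rw [dist_eq_norm] at ha hb
        rcases eq_or_lt_of_le hs with hs0 | hs0
        · have ht1 : t = 1 := by linarith
          rw [← hs0, ht1]; simpa using hb
        · nlinarith [mul_lt_mul_of_pos_left ha hs0, mul_le_mul_of_nonneg_left hb.le ht]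

lemma stable {n : ℕ} (G : SimpleGraph (Fin n)) (π : Fin n → Plane) (h : IsSLEmbedding G π) :
    ∃ ε > 0, ∀ π' : Fin n → Plane, (∀ v, dist (π' v) (π v) < ε) → Function.Injective π' →
      (∀ u v w : Fin n, u ≠ v → u ≠ w → v ≠ w →
        ¬ Collinear ℝ ({π' u, π' v, π' w} : Set Plane)) →
      IsSLEmbedding G π' := by
  classical
  set T : Finset (Fin n × Fin n × Fin n × Fin n) := Finset.univ.filter
    (fun t => G.Adj t.1 t.2.1 ∧ G.Adj t.2.2.1 t.2.2.2 ∧ t.1 ≠ t.2.2.1 ∧ t.1 ≠ t.2.2.2 ∧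
      t.2.1 ≠ t.2.2.1 ∧ t.2.1 ≠ t.2.2.2) with hT
  have hsep : ∃ δ > 0, ∀ t ∈ T, Disjoint
      (thickening δ (segment ℝ (π t.1) (π t.2.1)))
      (thickening δ (segment ℝ (π t.2.2.1) (π t.2.2.2))) := by
    refine uniform_eps T _ ?_ ?_
    · intro t ε δ hδ hδε hQ
      exact hQ.mono (thickening_mono hδε _) (thickening_mono hδε _)
    · rintro ⟨u, v, x, y⟩ ht
      simp only [hT, Finset.mem_filter, Finset.mem_univ, true_and] at ht
      obtain ⟨h1, h2, hux, huy, hvx, hvy⟩ := ht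
      have hne : s(u, v) ≠ s(x, y) := by
        intro h'
        rw [Sym2.eq_iff] at h'
        obtain ⟨h', -⟩ | ⟨h', -⟩ := h'
        exacts [hux h', huy h']
      have hdisj : Disjoint (segment ℝ (π u) (π v)) (segment ℝ (π x) (π y)) := by
        rw [Set.disjoint_iff_inter_eq_empty, ← Set.subset_empty_iff]
        refine (h.2.1 u v x y h1 h2 hne).trans ?_
        have : (({u, v} : Set (Fin n)) ∩ ({x, y} : Set (Fin n))) = ∅ := by
          ext w; simp only [Set.mem_inter_iff, Set.mem_insert_iff, Set.mem_singleton_iff,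
            Set.mem_empty_iff_false, iff_false, not_and]
          rintro (rfl | rfl) <;> rintro (rfl | rfl) <;> simp_all
        rw [this, Set.image_empty]
      obtain ⟨δ, hδ, hdisj'⟩ := hdisj.exists_thickenings (seg_compact _ _)
        (seg_compact _ _).isClosed
      exact ⟨δ, hδ, hdisj'⟩
  obtain ⟨δ, hδ, hsep⟩ := hsep
  refine ⟨δ, hδ, ?_⟩
  intro π' hdist hinj hgp
  refine ⟨hinj, ?_, ?_⟩
  · intro u v x y h1 h2 hne p hp
    obtain ⟨hp1, hp2⟩ := hp
    have huv : u ≠ v := h1.ne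
    have hxy : x ≠ y := h2.ne
    by_cases hux : u = x
    · subst hux
      have hvy : v ≠ y := by rintro rfl; exact hne rfl
      have hpa : p = π' u :=
        seg_inter_single (hgp u v y huv (hxy) hvy) ⟨hp1, hp2⟩
      exact ⟨u, ⟨Set.mem_insert _ _, Set.mem_insert _ _⟩, hpa.symm⟩
    by_cases huy : u = y
    · subst huy
      have hvx : v ≠ x := by
        rintro rfl; exact hne (Sym2.eq_swap)
      have hpa : p = π' u :=
        seg_inter_single (hgp u v x huv (Ne.symm hxy) hvx)
          ⟨hp1, segment_symm ℝ (π' x) (π' u) ▸ hp2⟩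
      exact ⟨u, ⟨Set.mem_insert _ _, Set.mem_insert_of_mem _ rfl⟩, hpa.symm⟩
    by_cases hvx : v = x
    · subst hvx
      have hpa : p = π' v :=
        seg_inter_single (hgp v u y (Ne.symm huv) hxy huy)
          ⟨segment_symm ℝ (π' u) (π' v) ▸ hp1, hp2⟩
      exact ⟨v, ⟨Set.mem_insert_of_mem _ rfl, Set.mem_insert _ _⟩, hpa.symm⟩
    by_cases hvy : v = y
    · subst hvy
      have hpa : p = π' v :=
        seg_inter_single (hgp v u x (Ne.symm huv) hvx hux)
          ⟨segment_symm ℝ (π' u) (π' v) ▸ hp1, segment_symm ℝ (π' x) (π' v) ▸ hp2⟩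
      exact ⟨v, ⟨Set.mem_insert_of_mem _ rfl, Set.mem_insert_of_mem _ rfl⟩, hpa.symm⟩
    · exfalso
      have hmem : (u, v, x, y) ∈ T := by
        simp only [hT, Finset.mem_filter, Finset.mem_univ, true_and]
        exact ⟨h1, h2, hux, huy, hvx, hvy⟩
      have hd := hsep _ hmem
      obtain ⟨q1, hq1, hdq1⟩ := near_segment hδ (hdist u) (hdist v) hp1
      obtain ⟨q2, hq2, hdq2⟩ := near_segment hδ (hdist x) (hdist y) hp2
      have hp1' : p ∈ thickening δ (segment ℝ (π u) (π v)) :=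
        mem_thickening_iff.2 ⟨q1, hq1, hdq1⟩
      have hp2' : p ∈ thickening δ (segment ℝ (π x) (π y)) :=
        mem_thickening_iff.2 ⟨q2, hq2, hdq2⟩
      exact Set.disjoint_left.1 hd hp1' hp2'
  · intro u v w h1 hwu hwv hmem
    obtain ⟨a, b, ha, hb, hab, heq⟩ := hmem
    exact hgp u v w h1.ne (Ne.symm hwu) (Ne.symm hwv) (collinear_of_combo hab heq)

/-- If a finite collection of graphs on `n` vertices is simultaneously embeddable, then it
is simultaneously embeddable on an `n`-point set in general position (no three points
collinear). -/
theorem simultaneouslyEmbeddable_generalPosition (n : ℕ)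
    (𝒢 : Finset (SimpleGraph (Fin n)))
    (h : SimultaneouslyEmbeddable (↑𝒢 : Set (SimpleGraph (Fin n)))) :
    ∃ P : Finset Plane, P.card = n ∧
      (∀ a ∈ P, ∀ b ∈ P, ∀ c ∈ P, a ≠ b → a ≠ c → b ≠ c →
        ¬ Collinear ℝ ({a, b, c} : Set Plane)) ∧
      ∀ G ∈ 𝒢, EmbedsOn G ↑P := by
  classical
  obtain ⟨P, hcard, hemb⟩ := h
  have hex : ∀ G : SimpleGraph (Fin n), ∃ π : Fin n → Plane,
      G ∈ 𝒢 → IsSLEmbedding G π ∧ Set.range π = ↑P := by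
    intro G
    by_cases hG : G ∈ 𝒢
    · obtain ⟨π, h1, h2⟩ := hemb G (by exact_mod_cast hG)
      exact ⟨π, fun _ => ⟨h1, h2⟩⟩
    · exact ⟨fun _ => 0, fun hG' => absurd hG' hG⟩
  choose embG hembG using hex
  have huni : ∃ ε > 0, ∀ G ∈ 𝒢, ∀ π' : Fin n → Plane,
      (∀ v, dist (π' v) (embG G v) < ε) → Function.Injective π' →
      (∀ u v w : Fin n, u ≠ v → u ≠ w → v ≠ w →
        ¬ Collinear ℝ ({π' u, π' v, π' w} : Set Plane)) →
      IsSLEmbedding G π' := by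
    refine uniform_eps 𝒢 _ ?_ ?_
    · intro G ε δ hδ hδε hQ π' hdist hinj hgp
      exact hQ π' (fun v => (hdist v).trans_le hδε) hinj hgp
    · intro G hG
      exact stable G (embG G) (hembG G hG).1
  obtain ⟨ε, hε, hstab⟩ := huni
  -- enumerate P
  have σ : {x // x ∈ P} ≃ Fin n := P.equivFin.trans (finCongr hcard)
  set e : Fin n → Plane := fun i => ((σ.symm i : {x // x ∈ P}) : Plane) with he
  obtain ⟨q, hqd, hqinj, hqgp⟩ := exists_gp n e hε
  refine ⟨Finset.image q Finset.univ, ?_, ?_, ?_⟩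
  · rw [Finset.card_image_of_injective _ hqinj, Finset.card_univ, Fintype.card_fin]
  · intro a ha b hb c hc hab hac hbc
    obtain ⟨i, -, rfl⟩ := Finset.mem_image.1 ha
    obtain ⟨j, -, rfl⟩ := Finset.mem_image.1 hb
    obtain ⟨l, -, rfl⟩ := Finset.mem_image.1 hc
    exact hqgp i j l (fun h' => hab (congrArg q h')) (fun h' => hac (congrArg q h'))
      (fun h' => hbc (congrArg q h'))
  · intro G hG
    obtain ⟨hsl, hrange⟩ := hembG G hG
    have hmemP : ∀ v, embG G v ∈ P := by
      intro v
      have : embG G v ∈ Set.range (embG G) := Set.mem_range_self v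
      rw [hrange] at this
      exact_mod_cast this
    set idx : Fin n → Fin n := fun v => σ ⟨embG G v, hmemP v⟩ with hidx
    have hidxinj : Function.Injective idx := by
      intro v w hvw
      apply hsl.1
      have := σ.injective hvw
      exact congrArg Subtype.val this
    have hidxsurj : Function.Surjective idx := Finite.surjective_of_injective hidxinj
    refine ⟨fun v => q (idx v), ?_, ?_⟩
    · refine hstab G hG _ ?_ ?_ ?_
      · intro v
        have h1 : e (idx v) = embG G v := by
          simp only [he, hidx, Equiv.symm_apply_apply]
        have := hqd (idx v)
        rw [h1] at this
        exact this
      · exact hqinj.comp hidxinj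
      · intro u v w huv huw hvw
        exact hqgp _ _ _ (fun h' => huv (hidxinj h')) (fun h' => huw (hidxinj h'))
          (fun h' => hvw (hidxinj h'))
    · have h1 : (Set.range fun v => q (idx v)) = Set.range q :=
        hidxsurj.range_comp q
      rw [h1, Finset.coe_image, Finset.coe_univ, Set.image_univ]
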